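/- Let g > 0, G > 0. Consider the conservative variables (h, m, Φ, p, M) ∈ ℝ × ℝ² × M₂(ℝ) × ℝ × M₂(ℝ) on the convex admissibility domain 𝒜 = {h > 0, p > 0, M symmetric positive-definite}. Then the mathematical-entropy candidate h·Ẽ, defined by h·Ẽ(h, m, Φ, p, M) = |m|²/(2h) + g·h²/2 + (G/2)·[ h · tr( (Φ/h) · (M/h)^{−1/2} · (Φ/h)ᵀ ) + h³ · (p/h)⁴ ], is a convex function of (h, m, Φ, p, M) on 𝒜. (Here (h, m, Φ, p, M) = (H, H·U, H·F_h, H·A_cc^{1/4}, H·A_h⁻²) are the conservative variables of the Saint-Venant–Maxwell system and Ẽ = (|U|² + gH)/2 + (G/2)(tr(F_h A_h F_hᵀ) + H² A_cc).) -/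

import Mathlib

open Matrix

/- For a symmetric positive-semidefinite matrix `Y`, `invSqrt Y := (Y^{1/2})⁻¹`
where `Y^{1/2}` is the unique positive square root (junk value `0` otherwise). -/
open scoped Classical in
noncomputable def invSqrt (Y : Matrix (Fin 2) (Fin 2) ℝ) : Matrix (Fin 2) (Fin 2) ℝ :=
  if h : Y.PosSemidef then
    (h.1.eigenvectorUnitary.1 * diagonal (Real.sqrt ∘ h.1.eigenvalues) *
      (star h.1.eigenvectorUnitary : Matrix (Fin 2) (Fin 2) ℝ))⁻¹ else 0

namespace SVMEntropy

abbrev Mat := Matrix (Fin 2) (Fin 2) ℝ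

lemma psd_smul {A : Mat} (hA : A.PosSemidef) {c : ℝ} (hc : 0 ≤ c) : (c • A).PosSemidef := by
  refine PosSemidef.of_dotProduct_mulVec_nonneg ?_ (fun x => ?_)
  · unfold Matrix.IsHermitian
    rw [conjTranspose_smul, hA.1]; simp
  · rw [smul_mulVec, dotProduct_smul, smul_eq_mul]
    exact mul_nonneg hc (hA.dotProduct_mulVec_nonneg x)

lemma pd_smul {A : Mat} (hA : A.PosDef) {c : ℝ} (hc : 0 < c) : (c • A).PosDef := by
  refine PosDef.of_dotProduct_mulVec_pos ?_ (fun x hx => ?_)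
  · unfold Matrix.IsHermitian
    rw [conjTranspose_smul, hA.1.eq]; simp
  · rw [smul_mulVec, dotProduct_smul, smul_eq_mul]
    exact mul_pos hc (hA.dotProduct_mulVec_pos hx)

lemma psd_trace_nonneg {A : Mat} (hA : A.PosSemidef) : 0 ≤ A.trace := by
  have h0 := hA.dotProduct_mulVec_nonneg (Pi.single 0 1 : Fin 2 → ℝ)
  have h1 := hA.dotProduct_mulVec_nonneg (Pi.single 1 1 : Fin 2 → ℝ)
  simp [dotProduct, mulVec, Fin.sum_univ_two, Pi.single_apply] at h0 h1
  rw [Matrix.trace_fin_two]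
  linarith

lemma pd_trace_pos {A : Mat} (hA : A.PosDef) : 0 < A.trace := by
  have hne : (Pi.single 0 1 : Fin 2 → ℝ) ≠ 0 := by
    intro h; have := congrFun h 0; simp at this
  have h0 := hA.dotProduct_mulVec_pos hne
  have h1 := (hA.posSemidef).dotProduct_mulVec_nonneg (Pi.single 1 1 : Fin 2 → ℝ)
  simp [dotProduct, mulVec, Fin.sum_univ_two, Pi.single_apply] at h0 h1
  rw [Matrix.trace_fin_two]
  linarith

lemma psd_posDef_of_det_ne_zero {A : Mat} (hA : A.PosSemidef) (hdet : A.det ≠ 0) : A.PosDef := by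
  refine PosDef.of_dotProduct_mulVec_pos hA.1 (fun x hx => ?_)
  rcases (hA.dotProduct_mulVec_nonneg x).lt_or_eq with h | h
  · exact h
  · exfalso
    apply hx
    have h0 : A *ᵥ x = 0 := (hA.dotProduct_mulVec_zero_iff x).1 h.symm
    have hinj : Function.Injective (A.mulVec) :=
      Matrix.mulVec_injective_iff_isUnit.mpr ((Matrix.isUnit_iff_isUnit_det A).2 hdet.isUnit)
    exact hinj (by simpa using h0)

open scoped Classical in
noncomputable def msqrt (Y : Mat) : Mat :=
  if h : Y.PosSemidef then
    (h.1.eigenvectorUnitary.1 * diagonal (Real.sqrt ∘ h.1.eigenvalues) *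
      (star h.1.eigenvectorUnitary : Matrix (Fin 2) (Fin 2) ℝ)) else 0

lemma invSqrt_eq (Y : Mat) : invSqrt Y = (msqrt Y)⁻¹ := by
  rw [invSqrt, msqrt]
  split_ifs with h
  · rfl
  · simp

lemma msqrt_mul_self {Y : Mat} (hY : Y.PosSemidef) : msqrt Y * msqrt Y = Y := by
  rw [msqrt, dif_pos hY]
  have hU : (star hY.1.eigenvectorUnitary : Mat) * hY.1.eigenvectorUnitary.1 = 1 :=
    Unitary.coe_star_mul_self _
  have hD : diagonal (Real.sqrt ∘ hY.1.eigenvalues) * diagonal (Real.sqrt ∘ hY.1.eigenvalues)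
      = diagonal hY.1.eigenvalues := by
    rw [diagonal_mul_diagonal]; congr 1; funext i
    exact Real.mul_self_sqrt (hY.eigenvalues_nonneg i)
  calc _ = hY.1.eigenvectorUnitary.1 * (diagonal (Real.sqrt ∘ hY.1.eigenvalues) *
        ((star hY.1.eigenvectorUnitary : Mat) * hY.1.eigenvectorUnitary.1) *
        diagonal (Real.sqrt ∘ hY.1.eigenvalues)) * (star hY.1.eigenvectorUnitary : Mat) := by
          simp only [mul_assoc]
    _ = hY.1.eigenvectorUnitary.1 * diagonal hY.1.eigenvalues *
        (star hY.1.eigenvectorUnitary : Mat) := by rw [hU, mul_one, hD]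
    _ = Y := by
      conv_rhs => rw [hY.1.spectral_theorem, Unitary.conjStarAlgAut_apply]
      rfl

lemma msqrt_psd {Y : Mat} (hY : Y.PosSemidef) : (msqrt Y).PosSemidef := by
  rw [msqrt, dif_pos hY]
  have hD : (diagonal (Real.sqrt ∘ hY.1.eigenvalues)).PosSemidef :=
    posSemidef_diagonal_iff.2 (fun i => Real.sqrt_nonneg _)
  have := hD.mul_mul_conjTranspose_same (hY.1.eigenvectorUnitary : Mat)
  convert this using 1
  simp [Matrix.star_eq_conjTranspose]

lemma msqrt_posDef {Y : Mat} (hY : Y.PosDef) : (msqrt Y).PosDef := by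
  refine psd_posDef_of_det_ne_zero (msqrt_psd hY.posSemidef) (fun h => ?_)
  have h2 : (msqrt Y).det * (msqrt Y).det = Y.det := by
    rw [← det_mul, msqrt_mul_self hY.posSemidef]
  rw [h, mul_zero] at h2
  exact hY.det_pos.ne h2

lemma msqrt_transpose {Y : Mat} (hY : Y.PosSemidef) : (msqrt Y)ᵀ = msqrt Y := by
  rw [← conjTranspose_eq_transpose_of_trivial]; exact (msqrt_psd hY).1

lemma lyap0 (S C : Mat) :
    S * ((S - S.trace • 1) * C * (S - S.trace • 1) + S.det • C)
      + ((S - S.trace • 1) * C * (S - S.trace • 1) + S.det • C) * S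
      = (2 * S.det * S.trace) • C := by
  ext i j
  fin_cases i <;> fin_cases j <;>
    · simp only [Matrix.mul_apply, Matrix.add_apply, Matrix.smul_apply, Matrix.sub_apply,
        Matrix.one_apply, Fin.sum_univ_two, Matrix.trace_fin_two, Matrix.det_fin_two,
        smul_eq_mul, Fin.isValue, ite_true, ite_false, if_true, if_false]
      norm_num
      ring

lemma lyap_solution (S C : Mat) (hd : S.det ≠ 0) (ht : S.trace ≠ 0) :
    S * ((2 * S.det * S.trace)⁻¹ • ((S - S.trace • 1) * C * (S - S.trace • 1) + S.det • C))
      + ((2 * S.det * S.trace)⁻¹ • ((S - S.trace • 1) * C * (S - S.trace • 1) + S.det • C)) * S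
      = C := by
  have hne : 2 * S.det * S.trace ≠ 0 := by simp [hd, ht]
  rw [Matrix.mul_smul, Matrix.smul_mul, ← smul_add, lyap0, smul_smul, inv_mul_cancel₀ hne,
    one_smul]

/-- `sig h M` is the positive square root of `h⁻¹ • M`. -/
noncomputable def sig (h : ℝ) (M : Mat) : Mat := msqrt (h⁻¹ • M)

noncomputable def Zm (h₀ : ℝ) (Φ₀ M₀ : Mat) : Mat := h₀⁻¹ • (Φ₀ * (sig h₀ M₀)⁻¹)

noncomputable def Cm (h₀ : ℝ) (Φ₀ M₀ : Mat) : Mat :=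
  (Real.sqrt h₀)⁻¹ • ((Zm h₀ Φ₀ M₀)ᵀ * Zm h₀ Φ₀ M₀)

noncomputable def Wm (h₀ : ℝ) (Φ₀ M₀ : Mat) : Mat :=
  (2 * (sig h₀ M₀).det * (sig h₀ M₀).trace)⁻¹ •
    ((sig h₀ M₀ - (sig h₀ M₀).trace • 1) * Cm h₀ Φ₀ M₀ * (sig h₀ M₀ - (sig h₀ M₀).trace • 1)
      + (sig h₀ M₀).det • Cm h₀ Φ₀ M₀)

lemma sig_pd {h : ℝ} {M : Mat} (hh : 0 < h) (hM : M.PosDef) : (sig h M).PosDef :=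
  msqrt_posDef (pd_smul hM (inv_pos.2 hh))

lemma sig_sq {h : ℝ} {M : Mat} (hh : 0 < h) (hM : M.PosDef) :
    sig h M * sig h M = h⁻¹ • M :=
  msqrt_mul_self (pd_smul hM (inv_pos.2 hh)).posSemidef

lemma sig_symm {h : ℝ} {M : Mat} (hh : 0 < h) (hM : M.PosDef) : (sig h M)ᵀ = sig h M :=
  msqrt_transpose (pd_smul hM (inv_pos.2 hh)).posSemidef

lemma arith_T {h a₀ t1 t2 t3 t4 tau : ℝ} (hh : 0 < h) (ha₀ : 0 < a₀)
    (c1 : 2 * h * t1 ≤ tau + h * h * t4)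
    (c2 : t4 ≤ a₀ * (h⁻¹ * t2 + (a₀ * a₀)⁻¹ * t3)) :
    2 * t1 - a₀ * t2 - t3 / a₀ * h ≤ h⁻¹ * tau := by
  rw [inv_mul_eq_div, le_div_iff₀ hh]
  have c2' : h * h * t4 ≤ h * h * (a₀ * (h⁻¹ * t2 + (a₀ * a₀)⁻¹ * t3)) := by nlinarith
  have e : h * h * (a₀ * (h⁻¹ * t2 + (a₀ * a₀)⁻¹ * t3)) = h * (a₀ * t2) + h * h * (t3 / a₀) := by
    field_simp
  rw [e] at c2'
  nlinarith [c1, c2']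

/-- The subgradient inequality for the matrix term. -/
lemma T_bound {h₀ h : ℝ} (hh₀ : 0 < h₀) (hh : 0 < h) {M₀ M : Mat} (hM₀ : M₀.PosDef)
    (hM : M.PosDef) (Φ₀ Φ : Mat) :
    2 * trace (Zm h₀ Φ₀ M₀ * Φᵀ) - Real.sqrt h₀ * trace (Wm h₀ Φ₀ M₀ * M)
      - trace (Wm h₀ Φ₀ M₀ * M₀) / Real.sqrt h₀ * h
      ≤ h⁻¹ * trace (Φ * (sig h M)⁻¹ * Φᵀ) := by
  set S₀ := sig h₀ M₀ with hS₀
  set S := sig h M with hS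
  set Z := Zm h₀ Φ₀ M₀ with hZ
  set C := Cm h₀ Φ₀ M₀ with hC
  set W := Wm h₀ Φ₀ M₀ with hW
  set a₀ := Real.sqrt h₀ with ha₀
  have ha₀pos : 0 < a₀ := Real.sqrt_pos.2 hh₀
  have ha₀sq : a₀ * a₀ = h₀ := Real.mul_self_sqrt hh₀.le
  have hSpd : S.PosDef := sig_pd hh hM
  have hS₀pd : S₀.PosDef := sig_pd hh₀ hM₀
  have hSsym : Sᵀ = S := sig_symm hh hM
  have hS₀sym : S₀ᵀ = S₀ := sig_symm hh₀ hM₀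
  have hSinv1 : S * S⁻¹ = 1 := Matrix.mul_nonsing_inv _ hSpd.det_pos.ne'.isUnit
  have hSinv2 : S⁻¹ * S = 1 := Matrix.nonsing_inv_mul _ hSpd.det_pos.ne'.isUnit
  have hCpsd : C.PosSemidef := by
    rw [hC, Cm, ← hZ]
    apply psd_smul _ (inv_nonneg.2 ha₀pos.le)
    have := Matrix.posSemidef_conjTranspose_mul_self Z
    rwa [conjTranspose_eq_transpose_of_trivial] at this
  have hd : 0 < S₀.det := hS₀pd.det_pos
  have ht : 0 < S₀.trace := pd_trace_pos hS₀pd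
  have hPsym : (S₀ - S₀.trace • 1)ᵀ = S₀ - S₀.trace • 1 := by
    rw [transpose_sub, transpose_smul, transpose_one, hS₀sym]
  have hWpsd : W.PosSemidef := by
    rw [hW, Wm, ← hS₀, ← hC]
    apply psd_smul _ (by positivity)
    apply Matrix.PosSemidef.add
    · have := hCpsd.mul_mul_conjTranspose_same (S₀ - S₀.trace • 1)
      rwa [conjTranspose_eq_transpose_of_trivial, hPsym] at this
    · exact psd_smul hCpsd hd.le
  have hlyap : S₀ * W + W * S₀ = C := by
    rw [hW, Wm, ← hS₀, ← hC]
    exact lyap_solution S₀ C hd.ne' ht.ne'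
  have httr : trace (Φ * Zᵀ) = trace (Z * Φᵀ) := by
    have h1 : (Φ * Zᵀ)ᵀ = Z * Φᵀ := by rw [transpose_mul, transpose_transpose]
    rw [← h1, trace_transpose]
  -- step 1
  have hA1 : 0 ≤ trace ((Φ - h • (Z * S)) * S⁻¹ * (Φ - h • (Z * S))ᵀ) := by
    apply psd_trace_nonneg
    have hinvpsd : (S⁻¹).PosSemidef := hSpd.posSemidef.inv
    have := hinvpsd.mul_mul_conjTranspose_same (Φ - h • (Z * S))
    rwa [conjTranspose_eq_transpose_of_trivial] at this
  have hexp : (Φ - h • (Z * S)) * S⁻¹ * (Φ - h • (Z * S))ᵀ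
      = Φ * S⁻¹ * Φᵀ - h • (Φ * Zᵀ) - h • (Z * Φᵀ) + (h * h) • (Z * S * Zᵀ) := by
    have htr2 : (Φ - h • (Z * S))ᵀ = Φᵀ - h • (S * Zᵀ) := by
      rw [transpose_sub, transpose_smul, transpose_mul, hSsym]
    have e1 : Φ * S⁻¹ * (S * Zᵀ) = Φ * Zᵀ := by
      rw [mul_assoc, ← mul_assoc S⁻¹ S, hSinv2, one_mul]
    have e2 : (Z * S) * S⁻¹ = Z := by rw [mul_assoc, hSinv1, mul_one]
    rw [htr2]
    simp only [Matrix.sub_mul, Matrix.mul_sub, Matrix.smul_mul, Matrix.mul_smul, smul_sub,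
      smul_smul]
    rw [e2, e1]
    rw [show Z * (S * Zᵀ) = Z * S * Zᵀ from (mul_assoc _ _ _).symm]
    abel
  have key1 : 2 * h * trace (Z * Φᵀ)
      ≤ trace (Φ * S⁻¹ * Φᵀ) + h * h * trace (Z * S * Zᵀ) := by
    rw [hexp] at hA1
    rw [Matrix.trace_add, Matrix.trace_sub, Matrix.trace_sub, Matrix.trace_smul,
      Matrix.trace_smul, Matrix.trace_smul, httr] at hA1
    simp only [smul_eq_mul] at hA1
    linarith
  -- step 2
  have hXsym : (S - S₀)ᵀ = S - S₀ := by rw [transpose_sub, hSsym, hS₀sym]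
  have h2a : 0 ≤ trace ((S - S₀) * W * (S - S₀)) := by
    have := hWpsd.mul_mul_conjTranspose_same (S - S₀)
    rw [conjTranspose_eq_transpose_of_trivial, hXsym] at this
    exact psd_trace_nonneg this
  have h2b : trace ((S - S₀) * W * (S - S₀))
      = trace (W * (S * S)) - trace (W * (S * S₀)) - trace (W * (S₀ * S))
        + trace (W * (S₀ * S₀)) := by
    rw [Matrix.trace_mul_cycle (S - S₀) W (S - S₀), Matrix.trace_mul_comm]
    have e4 : (S - S₀) * (S - S₀) = S * S - S * S₀ - S₀ * S + S₀ * S₀ := by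
      rw [Matrix.sub_mul, Matrix.mul_sub, Matrix.mul_sub]
      abel
    rw [e4, Matrix.mul_add, Matrix.mul_sub, Matrix.mul_sub, Matrix.trace_add,
      Matrix.trace_sub, Matrix.trace_sub]
  have hZC : Zᵀ * Z = a₀ • C := by
    rw [hC, Cm, ← hZ, ← ha₀, smul_smul, mul_inv_cancel₀ ha₀pos.ne', one_smul]
  have h2c : trace (Z * S * Zᵀ) = a₀ * (trace (W * (S * S₀)) + trace (W * (S₀ * S))) := by
    rw [Matrix.trace_mul_cycle Z S Zᵀ, hZC, Matrix.smul_mul, Matrix.trace_smul, smul_eq_mul,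
      ← hlyap, Matrix.add_mul, Matrix.trace_add]
    congr 2
    · rw [Matrix.trace_mul_cycle S₀ W S, Matrix.trace_mul_comm]
    · rw [mul_assoc]
  have key2 : trace (Z * S * Zᵀ)
      ≤ a₀ * (trace (W * (S * S)) + trace (W * (S₀ * S₀))) := by
    rw [h2c]
    apply mul_le_mul_of_nonneg_left _ ha₀pos.le
    linarith [h2a, h2b.le]
  -- step 3
  have hSS : S * S = h⁻¹ • M := by rw [hS]; exact sig_sq hh hM
  have hSS₀ : S₀ * S₀ = h₀⁻¹ • M₀ := by rw [hS₀]; exact sig_sq hh₀ hM₀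
  have hWS : trace (W * (S * S)) = h⁻¹ * trace (W * M) := by
    rw [hSS, Matrix.mul_smul, Matrix.trace_smul, smul_eq_mul]
  have hWS₀ : trace (W * (S₀ * S₀)) = h₀⁻¹ * trace (W * M₀) := by
    rw [hSS₀, Matrix.mul_smul, Matrix.trace_smul, smul_eq_mul]
  rw [hWS, hWS₀] at key2
  rw [← ha₀sq] at key2
  exact arith_T hh ha₀pos key1 key2

lemma trZ_base {h₀ : ℝ} (hh₀ : 0 < h₀) {M₀ : Mat} (hM₀ : M₀.PosDef) (Φ₀ : Mat) :
    trace (Zm h₀ Φ₀ M₀ * Φ₀ᵀ) = h₀⁻¹ * trace (Φ₀ * (sig h₀ M₀)⁻¹ * Φ₀ᵀ) := by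
  rw [Zm, Matrix.smul_mul, Matrix.trace_smul, smul_eq_mul]

lemma trW_base {h₀ : ℝ} (hh₀ : 0 < h₀) {M₀ : Mat} (hM₀ : M₀.PosDef) (Φ₀ : Mat) :
    trace (Wm h₀ Φ₀ M₀ * M₀)
      = trace (Φ₀ * (sig h₀ M₀)⁻¹ * Φ₀ᵀ) / (2 * Real.sqrt h₀ * h₀) := by
  set S₀ := sig h₀ M₀ with hS₀
  set Z := Zm h₀ Φ₀ M₀ with hZ
  set C := Cm h₀ Φ₀ M₀ with hC
  set W := Wm h₀ Φ₀ M₀ with hW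
  set a₀ := Real.sqrt h₀ with ha₀
  set τ := trace (Φ₀ * S₀⁻¹ * Φ₀ᵀ) with hτ
  set x := trace (W * M₀) with hx0
  have ha₀pos : 0 < a₀ := Real.sqrt_pos.2 hh₀
  have ha₀sq : a₀ * a₀ = h₀ := Real.mul_self_sqrt hh₀.le
  have hS₀pd : S₀.PosDef := sig_pd hh₀ hM₀
  have hS₀sym : S₀ᵀ = S₀ := sig_symm hh₀ hM₀
  have hinv2 : S₀⁻¹ * S₀ = 1 := Matrix.nonsing_inv_mul _ hS₀pd.det_pos.ne'.isUnit
  have hd : 0 < S₀.det := hS₀pd.det_pos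
  have ht : 0 < S₀.trace := pd_trace_pos hS₀pd
  have hlyap : S₀ * W + W * S₀ = C := by
    rw [hW, Wm, ← hS₀, ← hC]
    exact lyap_solution S₀ C hd.ne' ht.ne'
  have hZS₀ : Z * S₀ = h₀⁻¹ • Φ₀ := by
    rw [hZ, Zm, ← hS₀, Matrix.smul_mul, mul_assoc, hinv2, mul_one]
  have hZt : Zᵀ = h₀⁻¹ • (S₀⁻¹ * Φ₀ᵀ) := by
    rw [hZ, Zm, ← hS₀, transpose_smul, transpose_mul, transpose_nonsing_inv, hS₀sym]
  have htrQ : trace (Z * S₀ * Zᵀ) = h₀⁻¹ * h₀⁻¹ * τ := by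
    rw [hZS₀, hZt, Matrix.smul_mul, Matrix.mul_smul, smul_smul, ← mul_assoc,
      Matrix.trace_smul, smul_eq_mul, hτ]
  have hCS₀ : trace (C * S₀) = a₀⁻¹ * (h₀⁻¹ * h₀⁻¹ * τ) := by
    rw [hC, Cm, ← hZ, ← ha₀, Matrix.smul_mul, Matrix.trace_smul, smul_eq_mul,
      ← Matrix.trace_mul_cycle Z S₀ Zᵀ, htrQ]
  have hSS₀ : S₀ * S₀ = h₀⁻¹ • M₀ := by rw [hS₀]; exact sig_sq hh₀ hM₀
  have hCS₀' : trace (C * S₀) = 2 * (h₀⁻¹ * x) := by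
    rw [← hlyap, Matrix.add_mul, Matrix.trace_add]
    have e1 : trace (S₀ * W * S₀) = trace (W * (S₀ * S₀)) := by
      rw [Matrix.trace_mul_cycle S₀ W S₀, Matrix.trace_mul_comm]
    have e2 : trace (W * S₀ * S₀) = trace (W * (S₀ * S₀)) := by rw [mul_assoc]
    rw [e1, e2, hSS₀, Matrix.mul_smul, Matrix.trace_smul, smul_eq_mul, ← hx0]
    ring
  have hrel : a₀⁻¹ * (h₀⁻¹ * h₀⁻¹ * τ) = 2 * (h₀⁻¹ * x) := by rw [← hCS₀, hCS₀']
  field_simp at hrel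
  have h2 : h₀ * τ = h₀ * (x * (2 * a₀ * h₀)) := by rw [hrel]; ring
  have h3 : τ = x * (2 * a₀ * h₀) := mul_left_cancel₀ hh₀.ne' h2
  rw [eq_div_iff (by positivity)]
  linarith [h3]

lemma Tval {h : ℝ} (hh : 0 < h) {M : Mat} (hM : M.PosDef) (Φ : Mat) :
    h * trace ((h⁻¹ • Φ) * invSqrt (h⁻¹ • M) * (h⁻¹ • Φ)ᵀ)
      = h⁻¹ * trace (Φ * (sig h M)⁻¹ * Φᵀ) := by
  rw [invSqrt_eq]
  have hms : msqrt (h⁻¹ • M) = sig h M := rfl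
  rw [hms, transpose_smul, Matrix.smul_mul, Matrix.smul_mul, Matrix.mul_smul,
    Matrix.trace_smul, Matrix.trace_smul, smul_eq_mul, smul_eq_mul,
    ← mul_assoc, mul_inv_cancel₀ hh.ne', one_mul]

lemma tangA {h h₀ a b : ℝ} (hh : 0 < h) (hh₀ : 0 < h₀) :
    a * b / h₀ - a ^ 2 / (2 * h₀ ^ 2) * h ≤ b ^ 2 / (2 * h) := by
  have key : b ^ 2 / (2 * h) - (a * b / h₀ - a ^ 2 / (2 * h₀ ^ 2) * h)
      = (b * h₀ - a * h) ^ 2 / (2 * h * h₀ ^ 2) := by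
    field_simp
    ring
  nlinarith [div_nonneg (sq_nonneg (b * h₀ - a * h))
    (by positivity : (0:ℝ) ≤ 2 * h * h₀ ^ 2), key]

lemma tangD {h h₀ p p₀ : ℝ} (hh : 0 < h) (hh₀ : 0 < h₀) :
    4 * p₀ ^ 3 * p / h₀ - p₀ ^ 4 / h₀ ^ 2 * h - 2 * p₀ ^ 4 / h₀ ≤ p ^ 4 / h := by
  have key : p ^ 4 / h - (4 * p₀ ^ 3 * p / h₀ - p₀ ^ 4 / h₀ ^ 2 * h - 2 * p₀ ^ 4 / h₀)
      = ((p ^ 2 * h₀ - p₀ ^ 2 * h) ^ 2 + 2 * h * h₀ * p₀ ^ 2 * (p - p₀) ^ 2) / (h * h₀ ^ 2) := by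
    field_simp
    ring
  have hnum : 0 ≤ (p ^ 2 * h₀ - p₀ ^ 2 * h) ^ 2 + 2 * h * h₀ * p₀ ^ 2 * (p - p₀) ^ 2 := by
    have h1 : 0 ≤ 2 * h * h₀ * p₀ ^ 2 * (p - p₀) ^ 2 := by positivity
    nlinarith [sq_nonneg (p ^ 2 * h₀ - p₀ ^ 2 * h)]
  nlinarith [div_nonneg hnum (by positivity : (0:ℝ) ≤ h * h₀ ^ 2), key]

lemma tangB {g h h₀ : ℝ} (hg : 0 < g) :
    g * h₀ * h - g * h₀ ^ 2 / 2 ≤ g * h ^ 2 / 2 := by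
  nlinarith [mul_nonneg hg.le (sq_nonneg (h - h₀))]

/-- Existence of a supporting affine minorant of the entropy at each admissible point. -/
lemma tangent_exists (g G : ℝ) (hg : 0 < g) (hG : 0 < G) (h₀ p₀ : ℝ) (m₀ : Fin 2 → ℝ)
    (Φ₀ M₀ : Mat) (hh₀ : 0 < h₀) (hp₀ : 0 < p₀) (hM₀ : M₀.PosDef) :
    ∃ (c α β₀ β₁ γ : ℝ) (Z' W' : Mat),
      (∀ (h p : ℝ) (m : Fin 2 → ℝ) (Φ M : Mat), 0 < h → 0 < p → M.PosDef →
        c + α * h + β₀ * m 0 + β₁ * m 1 + trace (Z' * Φᵀ) + γ * p + trace (W' * M)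
          ≤ (m 0 ^ 2 + m 1 ^ 2) / (2 * h) + g * h ^ 2 / 2
              + (G / 2) * (h * trace ((h⁻¹ • Φ) * invSqrt (h⁻¹ • M) * (h⁻¹ • Φ)ᵀ)
                + h ^ 3 * (p / h) ^ 4)) ∧
      c + α * h₀ + β₀ * m₀ 0 + β₁ * m₀ 1 + trace (Z' * Φ₀ᵀ) + γ * p₀ + trace (W' * M₀)
        = (m₀ 0 ^ 2 + m₀ 1 ^ 2) / (2 * h₀) + g * h₀ ^ 2 / 2
            + (G / 2) * (h₀ * trace ((h₀⁻¹ • Φ₀) * invSqrt (h₀⁻¹ • M₀) * (h₀⁻¹ • Φ₀)ᵀ)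
              + h₀ ^ 3 * (p₀ / h₀) ^ 4) := by
  set a₀ := Real.sqrt h₀ with ha₀
  have ha₀pos : 0 < a₀ := Real.sqrt_pos.2 hh₀
  have ha₀sq : a₀ * a₀ = h₀ := Real.mul_self_sqrt hh₀.le
  refine ⟨-(g * h₀ ^ 2 / 2) - (G / 2) * (2 * p₀ ^ 4 / h₀),
    -((m₀ 0 ^ 2 + m₀ 1 ^ 2) / (2 * h₀ ^ 2)) + g * h₀
      - (G / 2) * (trace (Wm h₀ Φ₀ M₀ * M₀) / a₀ + p₀ ^ 4 / h₀ ^ 2),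
    m₀ 0 / h₀, m₀ 1 / h₀, (G / 2) * (4 * p₀ ^ 3 / h₀),
    G • Zm h₀ Φ₀ M₀, (-(G / 2) * a₀) • Wm h₀ Φ₀ M₀, ?_, ?_⟩
  · intro h p m Φ M hh hp hM
    have hTB := T_bound hh₀ hh hM₀ hM Φ₀ Φ
    rw [← ha₀] at hTB
    have hTval := Tval hh hM Φ
    have hDval : h ^ 3 * (p / h) ^ 4 = p ^ 4 / h := by
      field_simp
    have hZ'tr : trace ((G • Zm h₀ Φ₀ M₀) * Φᵀ) = G * trace (Zm h₀ Φ₀ M₀ * Φᵀ) := by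
      rw [Matrix.smul_mul, Matrix.trace_smul, smul_eq_mul]
    have hW'tr : trace (((-(G / 2) * a₀) • Wm h₀ Φ₀ M₀) * M)
        = (-(G / 2) * a₀) * trace (Wm h₀ Φ₀ M₀ * M) := by
      rw [Matrix.smul_mul, Matrix.trace_smul, smul_eq_mul]
    rw [hTval, hDval, hZ'tr, hW'tr]
    have hG2 : (0:ℝ) ≤ G / 2 := by linarith
    have hT2 := mul_le_mul_of_nonneg_left hTB hG2
    have hD2 := mul_le_mul_of_nonneg_left (tangD (p := p) (p₀ := p₀) hh hh₀) hG2
    have hA0 := tangA (a := m₀ 0) (b := m 0) hh hh₀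
    have hA1 := tangA (a := m₀ 1) (b := m 1) hh hh₀
    have hB := tangB (g := g) (h := h) (h₀ := h₀) hg
    ring_nf at hT2 hD2 hA0 hA1 hB ⊢
    linarith [hT2, hD2, hA0, hA1, hB]
  · have hTval := Tval hh₀ hM₀ Φ₀
    have hDval : h₀ ^ 3 * (p₀ / h₀) ^ 4 = p₀ ^ 4 / h₀ := by
      field_simp
    have hZ'tr : trace ((G • Zm h₀ Φ₀ M₀) * Φ₀ᵀ) = G * trace (Zm h₀ Φ₀ M₀ * Φ₀ᵀ) := by
      rw [Matrix.smul_mul, Matrix.trace_smul, smul_eq_mul]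
    have hW'tr : trace (((-(G / 2) * a₀) • Wm h₀ Φ₀ M₀) * M₀)
        = (-(G / 2) * a₀) * trace (Wm h₀ Φ₀ M₀ * M₀) := by
      rw [Matrix.smul_mul, Matrix.trace_smul, smul_eq_mul]
    rw [hTval, hDval, hZ'tr, hW'tr, trZ_base hh₀ hM₀ Φ₀, trW_base hh₀ hM₀ Φ₀, ← ha₀]
    set t1 := trace (Φ₀ * (sig h₀ M₀)⁻¹ * Φ₀ᵀ) with ht1
    rw [show h₀ = a₀ * a₀ from ha₀sq.symm]
    field_simp
    ring

end SVMEntropy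


open SVMEntropy in
set_option maxHeartbeats 1000000 in
/-- In the conservative variables
`(h, m, Φ, p, M) = (H, H·U, H·F_h, H·A_cc^{1/4}, H·A_h⁻²)` of the
Saint-Venant–Maxwell system, the mathematical-entropy candidate
`h·Ẽ = |m|²/(2h) + g·h²/2 + (G/2)·( h·tr((Φ/h)·(M/h)^{−1/2}·(Φ/h)ᵀ) + h³·(p/h)⁴ )`
is convex on the convex admissibility domain
`𝒜 = {h > 0, p > 0, M symmetric positive-definite}`. -/
theorem svm_entropy_convex (g G : ℝ) (hg : 0 < g) (hG : 0 < G) :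
    ConvexOn ℝ
      {q : ℝ × (Fin 2 → ℝ) × Matrix (Fin 2) (Fin 2) ℝ × ℝ × Matrix (Fin 2) (Fin 2) ℝ |
        0 < q.1 ∧ 0 < q.2.2.2.1 ∧ (q.2.2.2.2).PosDef}
      (fun q : ℝ × (Fin 2 → ℝ) × Matrix (Fin 2) (Fin 2) ℝ × ℝ × Matrix (Fin 2) (Fin 2) ℝ =>
        (q.2.1 0 ^ 2 + q.2.1 1 ^ 2) / (2 * q.1) + g * q.1 ^ 2 / 2
          + (G / 2) * (q.1 * Matrix.trace
                ((q.1⁻¹ • q.2.2.1) * invSqrt (q.1⁻¹ • q.2.2.2.2) * (q.1⁻¹ • q.2.2.1)ᵀ)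
              + q.1 ^ 3 * (q.2.2.2.1 / q.1) ^ 4)) := by
  have combo_pos : ∀ {u v a b : ℝ}, 0 < u → 0 < v → 0 ≤ a → 0 ≤ b → a + b = 1 →
      0 < a * u + b * v := by
    intro u v a b hu hv ha hb hab
    rcases ha.eq_or_lt with rfl | ha'
    · simp only [zero_add] at hab
      rw [hab]; simpa using hv
    · have h1 : 0 < a * u := mul_pos ha' hu
      have h2 : 0 ≤ b * v := mul_nonneg hb hv.le
      linarith
  have pd_combo : ∀ {A B : Mat} {a b : ℝ}, A.PosDef → B.PosDef → 0 ≤ a → 0 ≤ b → a + b = 1 →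
      (a • A + b • B).PosDef := by
    intro A B a b hA hB ha hb hab
    rcases ha.eq_or_lt with rfl | ha'
    · simp only [zero_add] at hab
      rw [hab]; simpa using hB
    · rcases hb.eq_or_lt with rfl | hb'
      · simp only [add_zero] at hab
        rw [hab]; simpa using hA
      · exact (pd_smul hA ha').add (pd_smul hB hb')
  have hconv : Convex ℝ
      {q : ℝ × (Fin 2 → ℝ) × Matrix (Fin 2) (Fin 2) ℝ × ℝ × Matrix (Fin 2) (Fin 2) ℝ |
        0 < q.1 ∧ 0 < q.2.2.2.1 ∧ (q.2.2.2.2).PosDef} := by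
    intro x hx y hy a b ha hb hab
    refine ⟨?_, ?_, ?_⟩
    · exact combo_pos hx.1 hy.1 ha hb hab
    · exact combo_pos hx.2.1 hy.2.1 ha hb hab
    · exact pd_combo hx.2.2 hy.2.2 ha hb hab
  refine ⟨hconv, ?_⟩
  intro x hx y hy a b ha hb hab
  have hz := hconv hx hy ha hb hab
  obtain ⟨c, α, β₀, β₁, γ, Z', W', hle, heq⟩ :=
    tangent_exists g G hg hG (a • x + b • y).1 (a • x + b • y).2.2.2.1 (a • x + b • y).2.1
      (a • x + b • y).2.2.1 (a • x + b • y).2.2.2.2 hz.1 hz.2.1 hz.2.2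
  simp only [smul_eq_mul]
  rw [← heq]
  have hx1 : (a • x + b • y).1 = a * x.1 + b * y.1 := rfl
  have hm0 : (a • x + b • y).2.1 0 = a * x.2.1 0 + b * y.2.1 0 := rfl
  have hm1 : (a • x + b • y).2.1 1 = a * x.2.1 1 + b * y.2.1 1 := rfl
  have hp1 : (a • x + b • y).2.2.2.1 = a * x.2.2.2.1 + b * y.2.2.2.1 := rfl
  have hΦ : (a • x + b • y).2.2.1 = a • x.2.2.1 + b • y.2.2.1 := rfl
  have hM : (a • x + b • y).2.2.2.2 = a • x.2.2.2.2 + b • y.2.2.2.2 := rfl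
  have htrZ : trace (Z' * ((a • x + b • y).2.2.1)ᵀ)
      = a * trace (Z' * (x.2.2.1)ᵀ) + b * trace (Z' * (y.2.2.1)ᵀ) := by
    rw [hΦ, transpose_add, transpose_smul, transpose_smul, Matrix.mul_add, Matrix.mul_smul,
      Matrix.mul_smul, Matrix.trace_add, Matrix.trace_smul, Matrix.trace_smul,
      smul_eq_mul, smul_eq_mul]
  have htrW : trace (W' * (a • x + b • y).2.2.2.2)
      = a * trace (W' * x.2.2.2.2) + b * trace (W' * y.2.2.2.2) := by
    rw [hM, Matrix.mul_add, Matrix.mul_smul, Matrix.mul_smul, Matrix.trace_add,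
      Matrix.trace_smul, Matrix.trace_smul, smul_eq_mul, smul_eq_mul]
  rw [hx1, hm0, hm1, hp1, htrZ, htrW]
  have h1 := hle x.1 x.2.2.2.1 x.2.1 x.2.2.1 x.2.2.2.2 hx.1 hx.2.1 hx.2.2
  have h2 := hle y.1 y.2.2.2.1 y.2.1 y.2.2.1 y.2.2.2.2 hy.1 hy.2.1 hy.2.2
  have h1' := mul_le_mul_of_nonneg_left h1 ha
  have h2' := mul_le_mul_of_nonneg_left h2 hb
  have hc : a * c + b * c = c := by rw [← add_mul, hab, one_mul]
  nlinarith [h1', h2', hc]
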